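/- arXiv:1602.04847 — 6 statements merged into one kernel-verified Lean document; each statement's English description precedes it below -/
import Mathlib

section
/- Let f : ℝⁿ → ℝ be differentiable and α-strongly convex for some α > 0, let x* be a minimizer of f, let y₁, …, y_k ∈ ℝⁿ and set fval = min_{i∈[k]} f(y_i). Then x* belongs to the region R_k = ⋂_{i∈[k]} B(y_i, α, fval). -/
open RealInnerProductSpace

/-- The ball `B(x, α, v)` from the paper: the set of `z` with
`‖z − (x − (1/α)∇f(x))‖² ≤ ‖∇f(x)‖²/α² − (2/α)(f(x) − v)`. -/
noncomputable def ballB {n : ℕ} (f : EuclideanSpace ℝ (Fin n) → ℝ)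
    (x : EuclideanSpace ℝ (Fin n)) (α v : ℝ) : Set (EuclideanSpace ℝ (Fin n)) :=
  {z | ‖z - (x - (1 / α) • gradient f x)‖ ^ 2 ≤
        ‖gradient f x‖ ^ 2 / α ^ 2 - (2 / α) * (f x - v)}

section

variable {E : Type*} [NormedAddCommGroup E] [InnerProductSpace ℝ E]

theorem norm_sub_sub_smul_sq (x y g : E) (c : ℝ) :
    ‖x - (y - c • g)‖ ^ 2 = ‖x - y‖ ^ 2 + 2 * c * ⟪g, x - y⟫ + c ^ 2 * ‖g‖ ^ 2 := by
  rw [show x - (y - c • g) = (x - y) + c • g by abel, norm_add_sq_real, real_inner_smul_right,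
    norm_smul, mul_pow, Real.norm_eq_abs, sq_abs, real_inner_comm]
  ring

/-- Completing the square in the strong-convexity lower bound `b ≥ a + ⟪g, x - y⟫ + α/2 ‖x - y‖²`
centres it at the gradient step `y - α⁻¹ g`. -/
theorem norm_sub_gradientStep_sq_le {α a b : ℝ} (hα : 0 < α) {x y g : E}
    (h : a + ⟪g, x - y⟫ + α / 2 * ‖x - y‖ ^ 2 ≤ b) :
    ‖x - (y - (1 / α) • g)‖ ^ 2 ≤ ‖g‖ ^ 2 / α ^ 2 - (2 / α) * (a - b) := by
  rw [norm_sub_sub_smul_sq]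
  field_simp
  linarith [mul_le_mul_of_nonneg_left h hα.le]

end

theorem mem_ballB_of_le {n : ℕ} {f : EuclideanSpace ℝ (Fin n) → ℝ} {α v : ℝ} (hα : 0 < α)
    {x y : EuclideanSpace ℝ (Fin n)}
    (hsc : f x ≥ f y + ⟪gradient f y, x - y⟫ + (α / 2) * ‖x - y‖ ^ 2) (hv : f x ≤ v) :
    x ∈ ballB f y α v :=
  norm_sub_gradientStep_sq_le hα (hsc.le.trans hv)

theorem stmt1_general {n k : ℕ} (hk : 0 < k) (f : EuclideanSpace ℝ (Fin n) → ℝ) (α : ℝ) (hα : 0 < α)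
    (hsc : ∀ x y : EuclideanSpace ℝ (Fin n),
      f y ≥ f x + (inner ℝ (gradient f x) (y - x) : ℝ) + (α / 2) * ‖y - x‖ ^ 2)
    (xstar : EuclideanSpace ℝ (Fin n)) (hxstar : ∀ y, f xstar ≤ f y)
    (y : Fin k → EuclideanSpace ℝ (Fin n)) (fval : ℝ)
    (hfval : fval = Finset.univ.inf' ⟨⟨0, hk⟩, Finset.mem_univ _⟩ (fun i => f (y i))) :
    xstar ∈ ⋂ i : Fin k, ballB f (y i) α fval := by
  have hmin : f xstar ≤ fval := hfval ▸ Finset.le_inf' _ _ fun j _ => hxstar (y j)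
  exact Set.mem_iInter.mpr fun i => mem_ballB_of_le hα (hsc (y i) xstar) hmin

/-- If `f` is differentiable and `α`-strongly convex with minimizer `x*`,
`y₁, …, y_k` are any points and `fval = min_i f(y_i)`, then `x* ∈ ⋂ᵢ B(yᵢ, α, fval)`. -/
theorem stmt1 {n k : ℕ} (hk : 0 < k) (f : EuclideanSpace ℝ (Fin n) → ℝ) (α : ℝ) (hα : 0 < α)
    (hdiff : Differentiable ℝ f)
    (hsc : ∀ x y : EuclideanSpace ℝ (Fin n),
      f y ≥ f x + (inner ℝ (gradient f x) (y - x) : ℝ) + (α / 2) * ‖y - x‖ ^ 2)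
    (xstar : EuclideanSpace ℝ (Fin n)) (hxstar : ∀ y, f xstar ≤ f y)
    (y : Fin k → EuclideanSpace ℝ (Fin n)) (fval : ℝ)
    (hfval : fval = Finset.univ.inf' ⟨⟨0, hk⟩, Finset.mem_univ _⟩ (fun i => f (y i))) :
    xstar ∈ ⋂ i : Fin k, ballB f (y i) α fval :=
  stmt1_general hk f α hα hsc xstar hxstar y fval hfval
end

section
/- Let c₁, …, c_k ∈ ℝⁿ, r₁, …, r_k > 0, F_R the logarithmic barrier of R = ⋂_{i=1}^k {x : ‖x − c_i‖ ≤ r_i}, and v_R(x) = log det(∇²F_R(x)) the volumetric barrier, defined on the interior U = {x : ‖x − c_i‖ < r_i ∀i} (where ∇²F_R(x) is positive definite). Then for x ∈ U, writing H = ∇²F_R(x), d_i = d_i(x), and σ_i = d_i²·⟪x − c_i, H⁻¹(x − c_i)⟫, the gradient of v_R at x equals ∇v_R(x) = (2·tr(H⁻¹))·Σ_{i=1}^k d_i²(x − c_i) + 4·H⁻¹(Σ_{i=1}^k d_i²(x − c_i)) + 8·Σ_{i=1}^k d_i σ_i (x − c_i). -/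
/-!
On the open set `U` where every `rᵢ² - ‖y - cᵢ‖²` is positive, the gradient of `F` is
`Σᵢ dᵢ (y - cᵢ)` and its Hessian is `H(y) = Σᵢ (dᵢ I + 2dᵢ² (y - cᵢ)(y - cᵢ)ᵀ)`, a self-adjoint
operator. By Jacobi's formula `log det H` has, at `x`, the same derivative as
`y ↦ tr (H(x)⁻¹ H(y)) = Σᵢ (dᵢ(y) tr H(x)⁻¹ + 2dᵢ(y)² ⟪y - cᵢ, H(x)⁻¹ (y - cᵢ)⟫)`, a scalar
function whose gradient is computed directly, using `∇dᵢ = 2dᵢ² (y - cᵢ)` and the symmetry of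
`H(x)⁻¹`.
-/

open Matrix
open scoped RealInnerProductSpace Topology

theorem det_updateRow_eq_sum_mul_adjugate {R ι : Type*} [CommRing R] [Fintype ι] [DecidableEq ι]
    (A : Matrix ι ι R) (p : ι) (d : ι → R) :
    (A.updateRow p d).det = ∑ q, d q * A.adjugate q p := by
  rw [← cramer_transpose_apply, cramer_eq_adjugate_mulVec, ← adjugate_transpose]
  simp [mulVec, dotProduct, mul_comm]

section Jacobi

variable {𝕜 : Type*} [NontriviallyNormedField 𝕜] {ι : Type*} [Fintype ι] [DecidableEq ι]

variable (𝕜 ι) in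
/-- `Matrix.detRowAlternating`, bundled as a continuous map through the Leibniz formula. -/
noncomputable def continuousDetRows : ContinuousMultilinearMap 𝕜 (fun _ : ι => ι → 𝕜) 𝕜 :=
  ∑ σ : Equiv.Perm ι, (Equiv.Perm.sign σ : 𝕜) •
    (ContinuousMultilinearMap.mkPiAlgebra 𝕜 ι 𝕜).compContinuousLinearMap
      fun p => ContinuousLinearMap.proj (σ⁻¹ p)

theorem continuousDetRows_apply (m : ι → ι → 𝕜) : continuousDetRows 𝕜 ι m = (of m).det := by
  rw [det_apply]
  simp only [continuousDetRows, _root_.sum_apply, _root_.smul_apply,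
    ContinuousMultilinearMap.compContinuousLinearMap_apply,
    ContinuousMultilinearMap.mkPiAlgebra_apply, ContinuousLinearMap.proj_apply, of_apply,
    Units.smul_def, zsmul_eq_mul]
  refine Finset.sum_congr rfl fun σ _ => ?_
  rw [← Equiv.prod_comp σ]
  simp

theorem continuousDetRows_linearDeriv (m D : ι → ι → 𝕜) :
    (continuousDetRows 𝕜 ι).linearDeriv m D = (adjugate (of m) * of D).trace := by
  simp only [ContinuousMultilinearMap.linearDeriv_apply, continuousDetRows_apply, trace, diag,
    mul_apply, of_apply]
  rw [Finset.sum_comm]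
  refine Finset.sum_congr rfl fun p _ => ?_
  simp_rw [mul_comm (adjugate _ _ _)]
  exact det_updateRow_eq_sum_mul_adjugate (of m) p (D p)

variable [CompleteSpace 𝕜] {V : Type*} [NormedAddCommGroup V] [NormedSpace 𝕜 V]
  [FiniteDimensional 𝕜 V] {E : Type*} [NormedAddCommGroup E] [NormedSpace 𝕜 E]

theorem HasFDerivAt.linearMap_det {f : E → V →L[𝕜] V} {f' : E →L[𝕜] V →L[𝕜] V} {x : E}
    (hf : HasFDerivAt f f' x) {B : V →L[𝕜] V} (hB : B ∘L f x = ContinuousLinearMap.id 𝕜 V)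
    {ψ : E →L[𝕜] 𝕜} (hψ : HasFDerivAt (fun y => LinearMap.trace 𝕜 V (B ∘L f y)) ψ x) :
    HasFDerivAt (fun y => LinearMap.det (f y : V →ₗ[𝕜] V))
      (LinearMap.det (f x : V →ₗ[𝕜] V) • ψ) x := by
  let b := Module.finBasis 𝕜 V
  let M : (V →L[𝕜] V) →L[𝕜] (Fin (Module.finrank 𝕜 V) → Fin (Module.finrank 𝕜 V) → 𝕜) :=
    LinearMap.toContinuousLinearMap ((ofLinearEquiv 𝕜).symm.toLinearMap ∘ₗ
      (LinearMap.toMatrix b b).toLinearMap ∘ₗ ContinuousLinearMap.coeLM 𝕜)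
  have hM : ∀ T, of (M T) = LinearMap.toMatrix b b T := fun _ => rfl
  let trB : (V →L[𝕜] V) →L[𝕜] 𝕜 :=
    (LinearMap.trace 𝕜 V ∘ₗ ContinuousLinearMap.coeLM 𝕜).toContinuousLinearMap ∘L
      ContinuousLinearMap.compL 𝕜 V V V B
  have hψ_eq : ψ = trB ∘L f' := hψ.unique (trB.hasFDerivAt.comp x hf)
  have hdet : (fun y => LinearMap.det (f y : V →ₗ[𝕜] V)) =
      fun y => continuousDetRows 𝕜 _ (M (f y)) := by
    funext y
    rw [continuousDetRows_apply, hM, LinearMap.det_toMatrix]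
  have hadj : adjugate (LinearMap.toMatrix b b (f x)) =
      LinearMap.det (f x : V →ₗ[𝕜] V) • LinearMap.toMatrix b b B := by
    have hBA : LinearMap.toMatrix b b B * LinearMap.toMatrix b b (f x) = 1 := by
      rw [← LinearMap.toMatrix_mul, Module.End.mul_eq_comp, ← ContinuousLinearMap.toLinearMap_comp,
        hB, ContinuousLinearMap.coe_id]
      exact LinearMap.toMatrix_id b
    rw [← LinearMap.det_toMatrix b, ← Matrix.mul_one (adjugate _), ← mul_eq_one_comm.mp hBA,
      ← Matrix.mul_assoc, adjugate_mul, smul_mul, Matrix.one_mul]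
  rw [hdet]
  refine (((continuousDetRows 𝕜 _).hasFDerivAt (M (f x))).comp x
    (M.hasFDerivAt.comp x hf)).congr_fderiv ?_
  ext u
  simp only [ContinuousLinearMap.comp_apply, continuousDetRows_linearDeriv, hM, hψ_eq]
  rw [hadj, smul_mul, trace_smul, ← LinearMap.toMatrix_mul, ← LinearMap.trace_eq_matrix_trace]
  rfl

end Jacobi

theorem HasFDerivAt.log_linearMap_det {V : Type*} [NormedAddCommGroup V] [NormedSpace ℝ V]
    [FiniteDimensional ℝ V] {E : Type*} [NormedAddCommGroup E] [NormedSpace ℝ E]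
    {f : E → V →L[ℝ] V} {f' : E →L[ℝ] V →L[ℝ] V} {x : E}
    (hf : HasFDerivAt f f' x) {B : V →L[ℝ] V} (hB : B ∘L f x = ContinuousLinearMap.id ℝ V)
    {ψ : E →L[ℝ] ℝ} (hψ : HasFDerivAt (fun y => LinearMap.trace ℝ V (B ∘L f y)) ψ x) :
    HasFDerivAt (fun y => Real.log (LinearMap.det (f y : V →ₗ[ℝ] V))) ψ x := by
  have hdet : LinearMap.det (B : V →ₗ[ℝ] V) * LinearMap.det (f x : V →ₗ[ℝ] V) = 1 := by
    rw [← LinearMap.det_comp, ← ContinuousLinearMap.toLinearMap_comp, hB,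
      ContinuousLinearMap.coe_id, LinearMap.det_id]
  refine ((hf.linearMap_det hB hψ).log (right_ne_zero_of_mul_eq_one hdet)).congr_fderiv ?_
  exact inv_smul_smul₀ (right_ne_zero_of_mul_eq_one hdet) ψ

theorem LinearMap.IsSymmetric.of_rightInverse {𝕜 E : Type*} [RCLike 𝕜] [NormedAddCommGroup E]
    [InnerProductSpace 𝕜 E] {T S : E →ₗ[𝕜] E} (hT : T.IsSymmetric) (h : ∀ u, T (S u) = u) :
    S.IsSymmetric := fun u w => by
  conv_lhs => rw [← h w]
  rw [← hT, h]

theorem sq_sub_norm_sq_pos {E : Type*} [SeminormedAddCommGroup E] {a y : E} {ρ : ℝ}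
    (h : ‖y - a‖ < ρ) : 0 < ρ ^ 2 - ‖y - a‖ ^ 2 := by
  have := norm_nonneg (y - a)
  nlinarith

theorem eventually_forall_norm_sub_lt {E ι : Type*} [SeminormedAddCommGroup E] [Finite ι]
    {c : ι → E} {r : ι → ℝ} {y : E} (hy : ∀ i, ‖y - c i‖ < r i) :
    ∀ᶠ z in 𝓝 y, ∀ i, ‖z - c i‖ < r i :=
  Filter.eventually_all.2 fun i =>
    (continuous_id.sub continuous_const).norm.continuousAt.eventually_lt continuousAt_const (hy i)

section Barrier

variable {E : Type*} [NormedAddCommGroup E] [InnerProductSpace ℝ E] {ι : Type*} [Fintype ι]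
  (c : ι → E) (r : ι → ℝ)

theorem hasFDerivAt_inv_sq_sub_norm_sq (a : E) (ρ : ℝ) {y : E} (hy : ρ ^ 2 - ‖y - a‖ ^ 2 ≠ 0) :
    HasFDerivAt (fun z => (ρ ^ 2 - ‖z - a‖ ^ 2)⁻¹)
      ((2 * (ρ ^ 2 - ‖y - a‖ ^ 2)⁻¹ ^ 2) • innerSL ℝ (y - a)) y := by
  have hq := (((hasFDerivAt_id y).sub_const a).norm_sq).const_sub (ρ ^ 2)
  refine ((hasDerivAt_inv hy).comp_hasFDerivAt y hq).congr_fderiv ?_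
  ext u
  simp
  ring

theorem hasFDerivAt_inner_sub_apply {A : E →L[ℝ] E} (hA : (A : E →ₗ[ℝ] E).IsSymmetric) (a y : E) :
    HasFDerivAt (fun z => ⟪z - a, A (z - a)⟫) ((2 : ℝ) • innerSL ℝ (A (y - a))) y := by
  have h := (hasFDerivAt_id (𝕜 := ℝ) y).sub_const a
  have hA' : HasFDerivAt (fun z => A (z - a)) (A ∘L ContinuousLinearMap.id ℝ E) y :=
    A.hasFDerivAt.comp y h
  refine (h.inner ℝ hA').congr_fderiv ?_
  ext u
  have hAu : ⟪A (y - a), u⟫ = ⟪y - a, A u⟫ := hA (y - a) u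
  simp only [ContinuousLinearMap.comp_apply, ContinuousLinearMap.prod_apply, fderivInnerCLM_apply,
    ContinuousLinearMap.id_apply, _root_.smul_apply, innerSL_apply_apply, id, smul_eq_mul]
  rw [← hAu, real_inner_comm u]
  ring

noncomputable def logBarrier (y : E) : ℝ := -(1 / 2) * ∑ i, Real.log (r i ^ 2 - ‖y - c i‖ ^ 2)

noncomputable def logBarrierGrad (y : E) : E := ∑ i, (r i ^ 2 - ‖y - c i‖ ^ 2)⁻¹ • (y - c i)

noncomputable def logBarrierHess (y : E) : E →L[ℝ] E :=
  ∑ i, ((r i ^ 2 - ‖y - c i‖ ^ 2)⁻¹ • ContinuousLinearMap.id ℝ E +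
    ((2 * (r i ^ 2 - ‖y - c i‖ ^ 2)⁻¹ ^ 2) • innerSL ℝ (y - c i)).smulRight (y - c i))

variable {c r}

theorem hasGradientAt_logBarrier [CompleteSpace E] {y : E} (hy : ∀ i, ‖y - c i‖ < r i) :
    HasGradientAt (logBarrier c r) (logBarrierGrad c r y) y := by
  rw [hasGradientAt_iff_hasFDerivAt]
  have hlog := HasFDerivAt.fun_sum (u := Finset.univ) fun i _ =>
    ((((hasFDerivAt_id y).sub_const (c i)).norm_sq).const_sub (r i ^ 2)).log
      (sq_sub_norm_sq_pos (hy i)).ne'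
  refine (hlog.const_mul _).congr_fderiv ?_
  ext u
  simp only [one_div, id_eq, map_sub, ContinuousLinearMap.comp_id, smul_neg, Finset.sum_neg_distrib,
    neg_smul, neg_neg, _root_.smul_apply, _root_.sum_apply, _root_.sub_apply, coe_innerSL_apply,
    nsmul_eq_mul, Nat.cast_ofNat, smul_eq_mul, Finset.mul_sum, logBarrierGrad, map_sum, map_smul,
    InnerProductSpace.toDual_apply_apply]
  refine Finset.sum_congr rfl fun i _ => ?_
  ring

theorem hasFDerivAt_logBarrierGrad {y : E} (hy : ∀ i, ‖y - c i‖ < r i) :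
    HasFDerivAt (logBarrierGrad c r) (logBarrierHess c r y) y :=
  HasFDerivAt.fun_sum fun i _ =>
    (hasFDerivAt_inv_sq_sub_norm_sq (c i) (r i) (sq_sub_norm_sq_pos (hy i)).ne').smul
      ((hasFDerivAt_id y).sub_const (c i))

theorem contDiffAt_logBarrierGrad {n : WithTop ℕ∞} {y : E} (hy : ∀ i, ‖y - c i‖ < r i) :
    ContDiffAt ℝ n (logBarrierGrad c r) y := by
  refine ContDiffAt.sum fun i _ => ContDiffAt.smul ?_ (contDiffAt_id.sub contDiffAt_const)
  exact (contDiffAt_const.sub ((contDiff_norm_sq ℝ).contDiffAt.comp y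
    (contDiffAt_id.sub contDiffAt_const))).inv (sq_sub_norm_sq_pos (hy i)).ne'

theorem gradient_logBarrier_eventuallyEq [CompleteSpace E] {y : E} (hy : ∀ i, ‖y - c i‖ < r i) :
    gradient (logBarrier c r) =ᶠ[𝓝 y] logBarrierGrad c r :=
  (eventually_forall_norm_sub_lt hy).mono fun _ hz => (hasGradientAt_logBarrier hz).gradient

theorem fderiv_logBarrierGrad_eventuallyEq {y : E} (hy : ∀ i, ‖y - c i‖ < r i) :
    fderiv ℝ (logBarrierGrad c r) =ᶠ[𝓝 y] logBarrierHess c r :=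
  (eventually_forall_norm_sub_lt hy).mono fun _ hz => (hasFDerivAt_logBarrierGrad hz).fderiv

theorem logBarrierHess_apply (y u : E) : logBarrierHess c r y u =
    ∑ i, ((r i ^ 2 - ‖y - c i‖ ^ 2)⁻¹ • u +
      (2 * (r i ^ 2 - ‖y - c i‖ ^ 2)⁻¹ ^ 2 * ⟪y - c i, u⟫) • (y - c i)) := by
  simp [logBarrierHess, inner_sub_left]

variable (c r) in
theorem logBarrierHess_isSymmetric (y : E) : (logBarrierHess c r y : E →ₗ[ℝ] E).IsSymmetric := by
  intro u w
  rw [ContinuousLinearMap.coe_coe, logBarrierHess_apply, logBarrierHess_apply, sum_inner,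
    inner_sum]
  refine Finset.sum_congr rfl fun i _ => ?_
  simp only [inner_add_left, inner_add_right, real_inner_smul_right, real_inner_comm]
  ring

variable (c r) in
theorem trace_comp_logBarrierHess [FiniteDimensional ℝ E] (A : E →L[ℝ] E) (y : E) :
    LinearMap.trace ℝ E (A ∘L logBarrierHess c r y) = ∑ i, ((r i ^ 2 - ‖y - c i‖ ^ 2)⁻¹ *
      LinearMap.trace ℝ E A + 2 * (r i ^ 2 - ‖y - c i‖ ^ 2)⁻¹ ^ 2 * ⟪y - c i, A (y - c i)⟫) := by
  simp only [logBarrierHess, ContinuousLinearMap.comp_finsetSum,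
    ContinuousLinearMap.toLinearMap_sum, map_sum]
  refine Finset.sum_congr rfl fun i _ => ?_
  set d := (r i ^ 2 - ‖y - c i‖ ^ 2)⁻¹
  have hcomp : A ∘L (d • ContinuousLinearMap.id ℝ E +
      ((2 * d ^ 2) • innerSL ℝ (y - c i)).smulRight (y - c i)) =
      d • A + ((2 * d ^ 2) • innerSL ℝ (y - c i)).smulRight (A (y - c i)) := by
    ext u; simp
  rw [hcomp, ContinuousLinearMap.toLinearMap_add, ContinuousLinearMap.toLinearMap_smul, map_add,
    map_smul]
  exact congrArg (d • LinearMap.trace ℝ E A + ·)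
    (LinearMap.trace_smulRight ((2 * d ^ 2) • innerSL ℝ (y - c i) : E →ₗ[ℝ] ℝ) (A (y - c i)))

theorem hasFDerivAt_trace_comp_logBarrierHess [FiniteDimensional ℝ E] {A : E →L[ℝ] E}
    (hA : (A : E →ₗ[ℝ] E).IsSymmetric) {y : E} (hy : ∀ i, ‖y - c i‖ < r i) :
    HasFDerivAt (fun z => LinearMap.trace ℝ E (A ∘L logBarrierHess c r z)) (innerSL ℝ
      ((2 * LinearMap.trace ℝ E A) • ∑ i, (r i ^ 2 - ‖y - c i‖ ^ 2)⁻¹ ^ 2 • (y - c i) +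
        (4 : ℝ) • A (∑ i, (r i ^ 2 - ‖y - c i‖ ^ 2)⁻¹ ^ 2 • (y - c i)) +
        (8 : ℝ) • ∑ i, ((r i ^ 2 - ‖y - c i‖ ^ 2)⁻¹ *
          ((r i ^ 2 - ‖y - c i‖ ^ 2)⁻¹ ^ 2 * ⟪y - c i, A (y - c i)⟫)) • (y - c i))) y := by
  rw [funext (trace_comp_logBarrierHess c r A)]
  have hterm := fun i =>
    let hd := hasFDerivAt_inv_sq_sub_norm_sq (c i) (r i) (sq_sub_norm_sq_pos (hy i)).ne'
    (hd.mul_const (LinearMap.trace ℝ E A)).add (((hd.pow 2).const_mul 2).mul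
      (hasFDerivAt_inner_sub_apply hA (c i) y))
  refine (HasFDerivAt.fun_sum (u := Finset.univ) fun i _ => hterm i).congr_fderiv ?_
  ext u
  simp only [inv_pow, map_sub, Nat.add_one_sub_one, pow_one, nsmul_eq_mul, Nat.cast_ofNat,
    _root_.sum_apply, _root_.add_apply, _root_.smul_apply, _root_.sub_apply, coe_innerSL_apply,
    smul_eq_mul, map_sum, map_smul, map_add, Finset.mul_sum, ← Finset.sum_add_distrib]
  exact Finset.sum_congr rfl fun i _ => by ring

end Barrier

theorem stmt6_general {n k : ℕ} (c : Fin k → EuclideanSpace ℝ (Fin n)) (r : Fin k → ℝ)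
    (F : EuclideanSpace ℝ (Fin n) → ℝ)
    (hF : ∀ x, F x = -(1 / 2) * ∑ i : Fin k, Real.log (r i ^ 2 - ‖x - c i‖ ^ 2))
    (v : EuclideanSpace ℝ (Fin n) → ℝ)
    (hv : ∀ y, v y = Real.log (LinearMap.det (fderiv ℝ (gradient F) y).toLinearMap))
    (x : EuclideanSpace ℝ (Fin n)) (hx : ∀ i, ‖x - c i‖ < r i)
    (Hinv : EuclideanSpace ℝ (Fin n) →L[ℝ] EuclideanSpace ℝ (Fin n))
    (hHinv : ∀ u, Hinv (fderiv ℝ (gradient F) x u) = u ∧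
      fderiv ℝ (gradient F) x (Hinv u) = u) :
    HasGradientAt v
      ((2 * LinearMap.trace ℝ (EuclideanSpace ℝ (Fin n)) Hinv.toLinearMap) •
          (∑ i : Fin k, ((r i ^ 2 - ‖x - c i‖ ^ 2)⁻¹) ^ 2 • (x - c i))
        + (4 : ℝ) • Hinv (∑ i : Fin k, ((r i ^ 2 - ‖x - c i‖ ^ 2)⁻¹) ^ 2 • (x - c i))
        + (8 : ℝ) • ∑ i : Fin k,
            ((r i ^ 2 - ‖x - c i‖ ^ 2)⁻¹ *
              (((r i ^ 2 - ‖x - c i‖ ^ 2)⁻¹) ^ 2 *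
                (inner ℝ (x - c i) (Hinv (x - c i)) : ℝ))) • (x - c i)) x := by
  obtain rfl : F = logBarrier c r := funext hF
  have hG := (gradient_logBarrier_eventuallyEq hx).fderiv (𝕜 := ℝ)
  have hHess := hG.trans (fderiv_logBarrierGrad_eventuallyEq hx)
  have hleft : Hinv ∘L fderiv ℝ (gradient (logBarrier c r)) x = ContinuousLinearMap.id ℝ _ :=
    ContinuousLinearMap.ext fun u => (hHinv u).1
  have hsymm : (Hinv : EuclideanSpace ℝ (Fin n) →ₗ[ℝ] _).IsSymmetric :=
    (logBarrierHess_isSymmetric c r x).of_rightInverse fun u => hHess.self_of_nhds ▸ (hHinv u).2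
  have hdiff : DifferentiableAt ℝ (fderiv ℝ (gradient (logBarrier c r))) x :=
    (((contDiffAt_logBarrierGrad (n := 2) hx).fderiv_right le_rfl).differentiableAt
      one_ne_zero).congr_of_eventuallyEq hG
  have htrace : HasFDerivAt
      (fun y => LinearMap.trace ℝ (EuclideanSpace ℝ (Fin n))
        (Hinv ∘L fderiv ℝ (gradient (logBarrier c r)) y)) _ x :=
    (hasFDerivAt_trace_comp_logBarrierHess hsymm hx).congr_of_eventuallyEq
      (hHess.mono fun y hy => by simp only [hy])
  rw [funext hv, hasGradientAt_iff_hasFDerivAt]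
  exact hdiff.hasFDerivAt.log_linearMap_det hleft htrace

/-- Gradient of the volumetric barrier `v_R = log det ∇²F_R` of an
intersection of balls at an interior point `x`: writing `H = ∇²F_R(x)`,
`dᵢ = (rᵢ² − ‖x − cᵢ‖²)⁻¹` and `σᵢ = dᵢ²·⟪x − cᵢ, H⁻¹(x − cᵢ)⟫`, one has
`∇v_R(x) = (2·tr H⁻¹)·Σᵢ dᵢ²(x − cᵢ) + 4·H⁻¹(Σᵢ dᵢ²(x − cᵢ)) + 8·Σᵢ dᵢσᵢ(x − cᵢ)`. -/
theorem stmt6 {n k : ℕ} (c : Fin k → EuclideanSpace ℝ (Fin n)) (r : Fin k → ℝ)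
    (hr : ∀ i, 0 < r i)
    (F : EuclideanSpace ℝ (Fin n) → ℝ)
    (hF : ∀ x, F x = -(1 / 2) * ∑ i : Fin k, Real.log (r i ^ 2 - ‖x - c i‖ ^ 2))
    (v : EuclideanSpace ℝ (Fin n) → ℝ)
    (hv : ∀ y, v y = Real.log (LinearMap.det (fderiv ℝ (gradient F) y).toLinearMap))
    (x : EuclideanSpace ℝ (Fin n)) (hx : ∀ i, ‖x - c i‖ < r i)
    (Hinv : EuclideanSpace ℝ (Fin n) →L[ℝ] EuclideanSpace ℝ (Fin n))
    (hHinv : ∀ u, Hinv (fderiv ℝ (gradient F) x u) = u ∧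
      fderiv ℝ (gradient F) x (Hinv u) = u) :
    HasGradientAt v
      ((2 * LinearMap.trace ℝ (EuclideanSpace ℝ (Fin n)) Hinv.toLinearMap) •
          (∑ i : Fin k, ((r i ^ 2 - ‖x - c i‖ ^ 2)⁻¹) ^ 2 • (x - c i))
        + (4 : ℝ) • Hinv (∑ i : Fin k, ((r i ^ 2 - ‖x - c i‖ ^ 2)⁻¹) ^ 2 • (x - c i))
        + (8 : ℝ) • ∑ i : Fin k,
            ((r i ^ 2 - ‖x - c i‖ ^ 2)⁻¹ *
              (((r i ^ 2 - ‖x - c i‖ ^ 2)⁻¹) ^ 2 *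
                (inner ℝ (x - c i) (Hinv (x - c i)) : ℝ))) • (x - c i)) x :=
  stmt6_general c r F hF v hv x hx Hinv hHinv
end

section
/- Let f : ℝⁿ → ℝ be convex and twice differentiable with ∇²f(x) ⪯ β·I for all x ∈ ℝⁿ, where β > 0, let x* be a minimizer of f, and let r ≥ 0 be such that ‖x − x*‖ ≤ r for every x with f(x) ≤ f(y₀). Let (y_k)_{k≥0} be any sequence in ℝⁿ satisfying the decrease guarantee f(y_{k+1}) ≤ f(y_k) − ‖∇f(y_k)‖²/(2β) for all k ≥ 0. Then for all k ≥ 0, f(y_k) − f(x*) ≤ 2βr²/(k+4). -/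
/-!
Since the values `f (y k)` decrease, every `y k` lies in the sublevel set of `y 0`, so convexity
and Cauchy–Schwarz bound the gap `δ k = f (y k) - f x*` by `‖∇f (y k)‖ r`. The decrease guarantee
then yields the recursion `δ (k + 1) ≤ δ k - δ k ² / (2βr²)`. The Hessian bound makes
`t ↦ f (x* + t v) - β t² ‖v‖² / 2` concave, which gives `δ 0 ≤ βr² / 2`, and the recursion
propagates `δ k ≤ 2βr² / (k + 4)`.
-/

open Set InnerProductSpace

section LineRestriction

variable {E F : Type*} [NormedAddCommGroup E] [NormedSpace ℝ E]
  [NormedAddCommGroup F] [NormedSpace ℝ F]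

theorem hasDerivAt_comp_add_smul {g : E → F} {a v : E} {t : ℝ}
    (hg : DifferentiableAt ℝ g (a + t • v)) :
    HasDerivAt (fun s : ℝ => g (a + s • v)) (fderiv ℝ g (a + t • v) v) t := by
  simpa only [one_smul, Function.comp_def] using
    hg.hasFDerivAt.comp_hasDerivAt t (((hasDerivAt_id' t).smul_const v).const_add a)

end LineRestriction

variable {E : Type*} [NormedAddCommGroup E] [InnerProductSpace ℝ E] [CompleteSpace E]
  {f : E → ℝ}

theorem ConvexOn.add_inner_gradient_le (hf : ConvexOn ℝ univ f) {a : E}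
    (hfa : DifferentiableAt ℝ f a) (b : E) :
    f a + ⟪gradient f a, b - a⟫_ℝ ≤ f b := by
  have hline : ConvexOn ℝ univ fun t : ℝ => f (a + t • (b - a)) := by
    simpa [Function.comp_def, AffineMap.lineMap_apply, add_comm] using
      hf.comp_affineMap (AffineMap.lineMap a b)
  have hderiv := hasDerivAt_comp_add_smul (g := f) (v := b - a) (t := 0) (by simpa using hfa)
  have hslope : slope (fun t : ℝ => f (a + t • (b - a))) 0 1 = f b - f a := by simp [slope]
  have := hline.le_slope_of_hasDerivAt (mem_univ 0) (mem_univ 1) one_pos hderiv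
  rw [hslope, zero_smul, add_zero, ← inner_gradient_left] at this
  linarith

theorem le_add_inner_gradient_add_half_mul_norm_sq {β : ℝ} (hf : Differentiable ℝ f)
    (hf' : Differentiable ℝ (gradient f))
    (hhess : ∀ x u : E, ⟪fderiv ℝ (gradient f) x u, u⟫_ℝ ≤ β * ‖u‖ ^ 2) (a v : E) :
    f (a + v) ≤ f a + ⟪gradient f a, v⟫_ℝ + β / 2 * ‖v‖ ^ 2 := by
  have hderiv (t : ℝ) : HasDerivAt (fun s : ℝ => f (a + s • v) - β / 2 * ‖v‖ ^ 2 * s ^ 2)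
      (⟪gradient f (a + t • v), v⟫_ℝ - β * ‖v‖ ^ 2 * t) t := by
    refine ((hasDerivAt_comp_add_smul (a := a) (v := v) (hf _)).sub
      ((hasDerivAt_pow 2 t).const_mul (β / 2 * ‖v‖ ^ 2))).congr_deriv ?_
    simp only [inner_gradient_left]
    ring
  have hderiv2 (t : ℝ) : HasDerivAt (fun s : ℝ => ⟪gradient f (a + s • v), v⟫_ℝ - β * ‖v‖ ^ 2 * s)
      (⟪fderiv ℝ (gradient f) (a + t • v) v, v⟫_ℝ - β * ‖v‖ ^ 2) t := by
    refine (((hasDerivAt_comp_add_smul (a := a) (v := v) (hf' _)).inner ℝ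
      (hasDerivAt_const t v)).sub ((hasDerivAt_id t).const_mul (β * ‖v‖ ^ 2))).congr_deriv ?_
    simp
  have hconc : ConcaveOn ℝ univ fun s : ℝ => f (a + s • v) - β / 2 * ‖v‖ ^ 2 * s ^ 2 :=
    concaveOn_of_hasDerivWithinAt2_nonpos convex_univ
      (fun t _ => (hderiv t).continuousAt.continuousWithinAt)
      (fun t _ => (hderiv t).hasDerivWithinAt) (fun t _ => (hderiv2 t).hasDerivWithinAt)
      (fun t _ => by linarith [hhess (a + t • v) v])
  have hslope : slope (fun s : ℝ => f (a + s • v) - β / 2 * ‖v‖ ^ 2 * s ^ 2) 0 1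
      = f (a + v) - β / 2 * ‖v‖ ^ 2 - f a := by simp [slope]
  have := hconc.slope_le_of_hasDerivAt (mem_univ 0) (mem_univ 1) one_pos (hderiv 0)
  rw [hslope, zero_smul, add_zero, mul_zero, sub_zero] at this
  linarith

theorem ConvexOn.sub_le_norm_gradient_mul_norm_sub (hf : ConvexOn ℝ univ f) {a : E}
    (hfa : DifferentiableAt ℝ f a) (b : E) :
    f a - f b ≤ ‖gradient f a‖ * ‖a - b‖ := by
  have h := hf.add_inner_gradient_le hfa b
  rw [← neg_sub, inner_neg_right] at h
  linarith [real_inner_le_norm (gradient f a) (a - b)]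

theorem le_div_add_one_of_le_sub_sq_div {c K δ δ' : ℝ} (hc : 0 ≤ c) (hK : 1 ≤ K)
    (hδ : δ ≤ c / K) (hδ' : δ' ≤ δ - δ ^ 2 / c) : δ' ≤ c / (K + 1) := by
  rcases hc.eq_or_lt with rfl | hc
  · simp only [zero_div, div_zero, sub_zero] at hδ hδ' ⊢
    linarith
  rw [le_div_iff₀ (by linarith)] at hδ
  rw [le_div_iff₀ (by linarith)]
  have hδc : δ ≤ c := by nlinarith
  have hcδ' : c * δ' ≤ c * δ - δ ^ 2 := by
    have := mul_le_mul_of_nonneg_left hδ' hc.le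
    rwa [mul_sub, mul_div_cancel₀ _ hc.ne'] at this
  -- `c² - (K + 1)(cδ - δ²) = (c - Kδ)(c - δ) + δ²`
  have key : (c * δ - δ ^ 2) * (K + 1) ≤ c * c := by
    nlinarith [mul_nonneg (sub_nonneg.2 hδ) (sub_nonneg.2 hδc), sq_nonneg δ]
  refine le_of_mul_le_mul_left ?_ hc
  nlinarith

theorem le_div_add_of_le_sub_sq_div {δ : ℕ → ℝ} {c m : ℝ} (hc : 0 ≤ c) (hm : 1 ≤ m)
    (h0 : δ 0 ≤ c / m) (hstep : ∀ k, δ (k + 1) ≤ δ k - δ k ^ 2 / c) :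
    ∀ k : ℕ, δ k ≤ c / (k + m)
  | 0 => by simpa using h0
  | k + 1 => by
    have := le_div_add_one_of_le_sub_sq_div hc (le_add_of_nonneg_of_le k.cast_nonneg hm)
      (le_div_add_of_le_sub_sq_div hc hm h0 hstep k) (hstep k)
    rwa [Nat.cast_succ, add_right_comm]

/-- If `f` is convex and twice differentiable with `∇²f ⪯ β·I` (`β > 0`),
`x*` is a minimizer of `f`, `r ≥ 0` bounds `‖x − x*‖` on the sublevel set `{f ≤ f(y₀)}`,
and `(y_k)` satisfies the decrease guarantee `f(y_{k+1}) ≤ f(y_k) − ‖∇f(y_k)‖²/(2β)`, then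
`f(y_k) − f(x*) ≤ 2βr²/(k+4)`. -/
theorem stmt8 {n : ℕ} (f : EuclideanSpace ℝ (Fin n) → ℝ) (β : ℝ) (hβ : 0 < β)
    (hconv : ConvexOn ℝ Set.univ f)
    (hdiff : Differentiable ℝ f) (hdiff2 : Differentiable ℝ (gradient f))
    (hhess : ∀ (x u : EuclideanSpace ℝ (Fin n)),
      (inner ℝ (fderiv ℝ (gradient f) x u) u : ℝ) ≤ β * ‖u‖ ^ 2)
    (xstar : EuclideanSpace ℝ (Fin n)) (hxstar : ∀ z, f xstar ≤ f z)
    (y : ℕ → EuclideanSpace ℝ (Fin n))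
    (r : ℝ) (hr : 0 ≤ r)
    (hsub : ∀ x : EuclideanSpace ℝ (Fin n), f x ≤ f (y 0) → ‖x - xstar‖ ≤ r)
    (hdec : ∀ k, f (y (k + 1)) ≤ f (y k) - ‖gradient f (y k)‖ ^ 2 / (2 * β)) :
    ∀ k : ℕ, f (y k) - f xstar ≤ 2 * β * r ^ 2 / (k + 4) := by
  have hgrad : gradient f xstar = 0 := by
    simp [gradient, IsLocalMin.fderiv_eq_zero (Filter.Eventually.of_forall hxstar)]
  have hmono : Antitone fun k => f (y k) :=
    antitone_nat_of_succ_le fun k => (hdec k).trans (sub_le_self _ (by positivity))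
  have hdist (k : ℕ) : ‖y k - xstar‖ ≤ r := hsub _ (hmono (Nat.zero_le k))
  have hgap (k : ℕ) : f (y k) - f xstar ≤ ‖gradient f (y k)‖ * r :=
    (hconv.sub_le_norm_gradient_mul_norm_sub (hdiff _) xstar).trans
      (mul_le_mul_of_nonneg_left (hdist k) (norm_nonneg _))
  refine le_div_add_of_le_sub_sq_div (δ := fun k => f (y k) - f xstar) (by positivity)
    (by norm_num) ?_ fun k => ?_
  · have h := le_add_inner_gradient_add_half_mul_norm_sq hdiff hdiff2 hhess xstar (y 0 - xstar)
    rw [hgrad, inner_zero_left, add_sub_cancel] at h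
    have hquad := mul_le_mul_of_nonneg_left (pow_le_pow_left₀ (norm_nonneg _) (hdist 0) 2)
      (by positivity : 0 ≤ β / 2)
    linarith
  · have hsq : (f (y k) - f xstar) ^ 2 / (2 * β * r ^ 2) ≤ ‖gradient f (y k)‖ ^ 2 / (2 * β) := by
      rw [show 2 * β * r ^ 2 = r ^ 2 * (2 * β) by ring, ← div_div, ← div_pow]
      have hgap_nonneg := sub_nonneg.2 (hxstar (y k))
      gcongr
      exact div_le_of_le_mul₀ hr (norm_nonneg _) (hgap k)
    linarith [hdec k]
end

section
/- Let C > 0 and let (δ_k)_{k≥0} be a sequence of nonnegative reals such that δ_{k+1} ≤ δ_k and δ_k − δ_{k+1} ≥ δ_k²/C for all k ≥ 0, and δ₀ ≤ C/4. Then δ_k ≤ C/(k+4) for all k ≥ 0. -/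
/-- If `(δ_k)` is a nonincreasing sequence of nonnegative reals with
`δ_k − δ_{k+1} ≥ δ_k²/C` for all `k` and `δ₀ ≤ C/4` (where `C > 0`), then
`δ_k ≤ C/(k+4)` for all `k`. -/
theorem stmt10 (C : ℝ) (hC : 0 < C) (δ : ℕ → ℝ) (hnonneg : ∀ k, 0 ≤ δ k)
    (hmono : ∀ k, δ (k + 1) ≤ δ k) (hdec : ∀ k, δ k - δ (k + 1) ≥ δ k ^ 2 / C)
    (h0 : δ 0 ≤ C / 4) :
    ∀ k : ℕ, δ k ≤ C / (k + 4) := by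
  intro k
  induction k with
  | zero => simpa using by linarith
  | succ n ih =>
    have hd := hdec n
    have hn := hnonneg n
    have hp : (0:ℝ) < (n:ℝ) + 4 := by positivity
    have hp5 : (0:ℝ) < (n:ℝ) + 5 := by positivity
    have hstep : δ (n+1) ≤ δ n - δ n ^ 2 / C := by linarith
    have hhalf : δ n ≤ C / 2 := by
      calc δ n ≤ C / ((n:ℝ) + 4) := ih
        _ ≤ C / 2 := by
          apply div_le_div_of_nonneg_left hC.le (by norm_num) (by linarith)
    have h2 : δ n * ((n:ℝ) + 4) ≤ C := by
      have h := mul_le_mul_of_nonneg_right ih hp.le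
      rwa [div_mul_cancel₀ _ hp.ne'] at h
    have e1 : δ n ^ 2 / C * C = δ n ^ 2 := div_mul_cancel₀ _ hC.ne'
    have e2 : C / ((n:ℝ) + 5) * ((n:ℝ) + 5) = C := div_mul_cancel₀ _ hp5.ne'
    have key : δ n - δ n ^ 2 / C ≤ C / ((n:ℝ) + 5) := by
      nlinarith [sq_nonneg (δ n * ((n:ℝ)+4) - C), mul_pos hC hp5, div_nonneg (sq_nonneg (δ n)) hC.le, div_nonneg hC.le hp5.le]
    have : δ (n+1) ≤ C / ((n:ℝ) + 5) := hstep.trans key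
    calc δ (n+1) ≤ C / ((n:ℝ) + 5) := this
      _ ≤ C / ((n+1:ℕ) + 4) := by push_cast; apply le_of_eq; ring
end

section
/- Let k ≥ 1, let R = ⋂_{i=1}^k {x ∈ ℝⁿ : ‖x − c_i‖ ≤ r_i} with c_i ∈ ℝⁿ and r_i > 0, assume R has nonempty interior, and set D = max_{i∈[k]} r_i. Let ω_n denote the Lebesgue volume of the Euclidean unit ball in ℝⁿ. Then there exists i ∈ [k] such that for all x ∈ R, ‖x − c_i‖² ≥ r_i² − 24k²·(vol(R)/(Dⁿω_n))^{1/n}·D². -/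
/-!
Suppose no index works: then every ball `B(cᵢ, rᵢ)` contains a point `xᵢ ∈ R` lying at depth
more than `g = 12k²tD` inside it, where `t = (vol R / (Dⁿω_n))^{1/n}` (because
`rᵢ² − ‖xᵢ − cᵢ‖² ≤ 2D (rᵢ − ‖xᵢ − cᵢ‖)`). The average of the `xᵢ` is then at depth at least
`g / k` in every ball, so `R` contains a ball of radius `12ktD`, of volume `(12k)ⁿ vol R > vol R`.
-/

open MeasureTheory Metric

section Average

variable {E ι : Type*} [NormedAddCommGroup E] [NormedSpace ℝ E] [Fintype ι]

lemma norm_average_sub_le {x : ι → E} {p : E} {r g : ℝ} (i : ι)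
    (hx : ∀ j, ‖x j - p‖ ≤ r) (hi : ‖x i - p‖ ≤ r - g) :
    ‖(Fintype.card ι : ℝ)⁻¹ • ∑ j, x j - p‖ ≤ r - g / Fintype.card ι := by
  classical
  have hcard : 0 < Fintype.card ι := Fintype.card_pos_iff.mpr ⟨i⟩
  have hk : (0 : ℝ) < Fintype.card ι := Nat.cast_pos.mpr hcard
  have hsum : ∑ j, ‖x j - p‖ ≤ Fintype.card ι * r - g := by
    have hrest := Finset.sum_le_card_nsmul (Finset.univ.erase i) _ r fun j _ => hx j
    rw [Finset.card_erase_of_mem (Finset.mem_univ i), Finset.card_univ, nsmul_eq_mul,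
      Nat.cast_sub hcard, Nat.cast_one] at hrest
    rw [← Finset.add_sum_erase _ _ (Finset.mem_univ i)]
    linarith
  calc ‖(Fintype.card ι : ℝ)⁻¹ • ∑ j, x j - p‖
      = ‖(Fintype.card ι : ℝ)⁻¹ • ∑ j, (x j - p)‖ := by
        rw [Finset.sum_sub_distrib, smul_sub, Finset.sum_const, Finset.card_univ,
          ← Nat.cast_smul_eq_nsmul ℝ, smul_smul, inv_mul_cancel₀ hk.ne', one_smul]
    _ ≤ (Fintype.card ι : ℝ)⁻¹ * ∑ j, ‖x j - p‖ := by
        rw [norm_smul, Real.norm_of_nonneg (inv_nonneg.2 hk.le)]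
        gcongr
        exact norm_sum_le _ _
    _ ≤ (Fintype.card ι : ℝ)⁻¹ * (Fintype.card ι * r - g) := by gcongr
    _ = r - g / Fintype.card ι := by field_simp

lemma closedBall_average_subset_iInter_closedBall {c : ι → E} {r : ι → ℝ} {x : ι → E} {g : ℝ}
    (hx : ∀ j, x j ∈ ⋂ i, closedBall (c i) (r i)) (hgap : ∀ i, ‖x i - c i‖ ≤ r i - g) :
    closedBall ((Fintype.card ι : ℝ)⁻¹ • ∑ j, x j) (g / Fintype.card ι) ⊆
      ⋂ i, closedBall (c i) (r i) := by
  refine Set.subset_iInter fun i => closedBall_subset_closedBall' ?_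
  have hxi : ∀ j, ‖x j - c i‖ ≤ r i := fun j =>
    mem_closedBall_iff_norm.mp (Set.mem_iInter.mp (hx j) i)
  rw [dist_eq_norm]
  linarith [norm_average_sub_le i hxi (hgap i)]

end Average

lemma pow_mul_volume_closedBall_one_le {n : ℕ} {R : Set (EuclideanSpace ℝ (Fin n))}
    (hR : volume R ≠ ⊤) {y : EuclideanSpace ℝ (Fin n)} {ρ : ℝ} (hρ : 0 ≤ ρ)
    (hball : closedBall y ρ ⊆ R) :
    ρ ^ n * (volume (closedBall (0 : EuclideanSpace ℝ (Fin n)) 1)).toReal ≤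
      (volume R).toReal := by
  have hvol := Measure.addHaar_closedBall' volume y hρ
  rw [finrank_euclideanSpace_fin] at hvol
  have := ENNReal.toReal_mono hR (hvol ▸ measure_mono hball)
  rwa [ENNReal.toReal_mul, ENNReal.toReal_ofReal (by positivity)] at this

lemma measure_closedBall_toReal_pos {X : Type*} [PseudoMetricSpace X] [ProperSpace X]
    [MeasurableSpace X] (μ : Measure X) [μ.IsOpenPosMeasure] [IsFiniteMeasureOnCompacts μ] (x : X)
    {ε : ℝ} (hε : 0 < ε) : 0 < (μ (closedBall x ε)).toReal :=
  ENNReal.toReal_pos (measure_closedBall_pos μ x hε).ne' measure_closedBall_lt_top.ne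

lemma le_mul_rpow_of_closedBall_subset {n : ℕ} (hn : n ≠ 0) {R : Set (EuclideanSpace ℝ (Fin n))}
    (hR : volume R ≠ ⊤) {y : EuclideanSpace ℝ (Fin n)} {ρ s : ℝ} (hρ : 0 ≤ ρ) (hs : 0 < s)
    (hball : closedBall y ρ ⊆ R) :
    ρ ≤ s * ((volume R).toReal /
      (s ^ n * (volume (closedBall (0 : EuclideanSpace ℝ (Fin n)) 1)).toReal)) ^ ((1 : ℝ) / n) := by
  have hω := measure_closedBall_toReal_pos volume (0 : EuclideanSpace ℝ (Fin n)) one_pos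
  have hvol := pow_mul_volume_closedBall_one_le hR hρ hball
  rw [← div_le_iff₀' hs, ← pow_le_pow_iff_left₀ (by positivity) (by positivity) hn, one_div,
    Real.rpow_inv_natCast_pow (by positivity) hn, div_pow, div_le_div_iff₀ (by positivity)
    (by positivity)]
  nlinarith [pow_pos hs n]

lemma lt_sub_of_sq_lt_sq_sub_two_mul {a r D g : ℝ} (ha : 0 ≤ a) (har : a ≤ r) (hrD : r ≤ D)
    (h : a ^ 2 < r ^ 2 - 2 * D * g) : a < r - g := by
  nlinarith

/-- Let `R = ⋂ᵢ {x : ‖x − cᵢ‖ ≤ rᵢ}` (`k ≥ 1` balls, `rᵢ > 0`) have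
nonempty interior and let `D = maxᵢ rᵢ`. With `ω_n` the volume of the unit ball in `ℝⁿ`,
there exists `i` such that every `x ∈ R` satisfies
`‖x − cᵢ‖² ≥ rᵢ² − 24k²·(vol(R)/(Dⁿω_n))^{1/n}·D²`. -/
theorem stmt12 {n k : ℕ} (hk : 1 ≤ k) (c : Fin k → EuclideanSpace ℝ (Fin n))
    (r : Fin k → ℝ) (hr : ∀ i, 0 < r i)
    (R : Set (EuclideanSpace ℝ (Fin n)))
    (hR : R = ⋂ i : Fin k, Metric.closedBall (c i) (r i))
    (hint : (interior R).Nonempty)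
    (D : ℝ) (hD : D = Finset.univ.sup' ⟨⟨0, hk⟩, Finset.mem_univ _⟩ r) :
    ∃ i : Fin k, ∀ x ∈ R,
      ‖x - c i‖ ^ 2 ≥ r i ^ 2 -
        24 * (k : ℝ) ^ 2 *
          ((volume R).toReal /
            (D ^ n * (volume (Metric.closedBall (0 : EuclideanSpace ℝ (Fin n)) 1)).toReal))
            ^ ((1 : ℝ) / n) * D ^ 2 := by
  obtain ⟨i₀, -, hi₀⟩ := Finset.exists_mem_eq_sup' ⟨⟨0, hk⟩, Finset.mem_univ _⟩ r
  have hrD : ∀ i, r i ≤ D := fun i => hD ▸ Finset.le_sup' r (Finset.mem_univ i)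
  have hDpos : 0 < D := hD ▸ hi₀ ▸ hr i₀
  have hk2 : (1 : ℝ) ≤ (k : ℝ) ^ 2 := one_le_pow₀ (by exact_mod_cast hk)
  rcases Nat.eq_zero_or_pos n with rfl | hn
  · -- in `ℝ⁰` the exponent `1 / n` is the junk value `0`, so the bound holds trivially
    refine ⟨i₀, fun x _ => ?_⟩
    rw [Subsingleton.elim x (c i₀), sub_self, norm_zero, Nat.cast_zero, div_zero, Real.rpow_zero]
    nlinarith [mul_self_le_mul_self (hr i₀).le (hrD i₀),
      mul_le_mul_of_nonneg_right hk2 (sq_nonneg D)]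
  have hVfin : volume R ≠ ⊤ :=
    ((measure_mono (hR ▸ Set.iInter_subset _ i₀)).trans_lt measure_closedBall_lt_top).ne
  have hVpos : 0 < (volume R).toReal := ENNReal.toReal_pos
    ((isOpen_interior.measure_pos volume hint).trans_le (measure_mono interior_subset)).ne' hVfin
  have hω := measure_closedBall_toReal_pos volume (0 : EuclideanSpace ℝ (Fin n)) one_pos
  set t := ((volume R).toReal /
    (D ^ n * (volume (closedBall (0 : EuclideanSpace ℝ (Fin n)) 1)).toReal)) ^ ((1 : ℝ) / n)
  have htpos : 0 < t := by positivity
  by_contra! hcon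
  choose x hxR hxlt using hcon
  have hgap : ∀ i, ‖x i - c i‖ ≤ r i - 12 * k ^ 2 * t * D := fun i =>
    (lt_sub_of_sq_lt_sq_sub_two_mul (norm_nonneg _)
      (mem_closedBall_iff_norm.mp (Set.mem_iInter.mp (hR ▸ hxR i) i)) (hrD i)
      (by linarith [hxlt i])).le
  have hball := closedBall_average_subset_iInter_closedBall (fun j => hR ▸ hxR j) hgap
  rw [← hR, Fintype.card_fin] at hball
  have hρ := le_mul_rpow_of_closedBall_subset hn.ne' hVfin (by positivity) hDpos hball
  rw [show 12 * (k : ℝ) ^ 2 * t * D / k = 12 * k * (D * t) by field_simp] at hρ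
  nlinarith [mul_pos hDpos htpos]
end

section
/- Let k ≥ 1, let R = ⋂_{i=1}^k {x ∈ ℝⁿ : ‖x − c_i‖ ≤ r_i} with c_i ∈ ℝⁿ and r_i > 0, assume R has nonempty interior, set D = max_{i∈[k]} r_i, and let y be the minimizer over the interior {x : ‖x − c_i‖ < r_i ∀i} of the logarithmic barrier F_R(x) = −(1/2)·Σ_{i=1}^k log(r_i² − ‖x − c_i‖²). Then there exists i ∈ [k] with r_i² − ‖y − c_i‖² ≤ 4k·(vol(R)/(Dⁿω_n))^{1/n}·D², where ω_n is the Lebesgue volume of the Euclidean unit ball in ℝⁿ. -/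
open MeasureTheory

/-- Let `R = ⋂ᵢ {x : ‖x − cᵢ‖ ≤ rᵢ}` (`k ≥ 1` balls, `rᵢ > 0`) have
nonempty interior, let `D = maxᵢ rᵢ`, and let `y` minimize the logarithmic barrier
`F_R(x) = −(1/2)·Σᵢ log(rᵢ² − ‖x − cᵢ‖²)` over the interior `{x : ‖x − cᵢ‖ < rᵢ ∀i}`.
Then there exists `i` with `rᵢ² − ‖y − cᵢ‖² ≤ 4k·(vol(R)/(Dⁿω_n))^{1/n}·D²`, where `ω_n`
is the volume of the unit ball in `ℝⁿ`. -/
theorem stmt13 {n k : ℕ} (hk : 1 ≤ k) (c : Fin k → EuclideanSpace ℝ (Fin n))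
    (r : Fin k → ℝ) (hr : ∀ i, 0 < r i)
    (R : Set (EuclideanSpace ℝ (Fin n)))
    (hR : R = ⋂ i : Fin k, Metric.closedBall (c i) (r i))
    (hint : (interior R).Nonempty)
    (D : ℝ) (hD : D = Finset.univ.sup' ⟨⟨0, hk⟩, Finset.mem_univ _⟩ r)
    (F : EuclideanSpace ℝ (Fin n) → ℝ)
    (hF : ∀ x, F x = -(1 / 2) * ∑ i : Fin k, Real.log (r i ^ 2 - ‖x - c i‖ ^ 2))
    (y : EuclideanSpace ℝ (Fin n)) (hy : ∀ i, ‖y - c i‖ < r i)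
    (hymin : ∀ z : EuclideanSpace ℝ (Fin n), (∀ i, ‖z - c i‖ < r i) → F y ≤ F z) :
    ∃ i : Fin k,
      r i ^ 2 - ‖y - c i‖ ^ 2 ≤
        4 * (k : ℝ) *
          ((volume R).toReal /
            (D ^ n * (volume (Metric.closedBall (0 : EuclideanSpace ℝ (Fin n)) 1)).toReal))
            ^ ((1 : ℝ) / n) * D ^ 2 := by
  have hk' : (1 : ℝ) ≤ (k : ℝ) := by exact_mod_cast hk
  have hDi : ∀ i, r i ≤ D := by
    intro i; rw [hD]; exact Finset.le_sup' r (Finset.mem_univ i)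
  have hD0 : 0 < D := lt_of_lt_of_le (hr ⟨0, hk⟩) (hDi ⟨0, hk⟩)
  by_cases hn : n = 0
  · subst hn
    refine ⟨⟨0, hk⟩, ?_⟩
    have hnorm : ‖y - c ⟨0, hk⟩‖ = 0 := by
      have : y - c ⟨0, hk⟩ = 0 := Subsingleton.elim _ _
      simp [this]
    rw [hnorm]
    simp only [Nat.cast_zero, div_zero, Real.rpow_zero]
    have h1 : r ⟨0, hk⟩ ≤ D := hDi ⟨0, hk⟩
    have h2 : 0 < r ⟨0, hk⟩ := hr ⟨0, hk⟩
    nlinarith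
  -- main case : n ≥ 1
  obtain ⟨i0, -, hi0⟩ := Finset.exists_min_image Finset.univ
    (fun i => r i ^ 2 - ‖y - c i‖ ^ 2) ⟨⟨0, hk⟩, Finset.mem_univ _⟩
  set s := r i0 ^ 2 - ‖y - c i0‖ ^ 2 with hs
  have hspos : 0 < s := by nlinarith [hy i0, hr i0, norm_nonneg (y - c i0)]
  set ρ := s / (2 * D) with hρ
  have hρpos : 0 < ρ := div_pos hspos (by linarith)
  have hsub : Metric.closedBall y ρ ⊆ R := by
    rw [hR]
    intro x hx
    simp only [Set.mem_iInter, Metric.mem_closedBall]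
    intro i
    rw [Metric.mem_closedBall] at hx
    have h1 : dist x (c i) ≤ dist x y + dist y (c i) := dist_triangle _ _ _
    have h2 : dist y (c i) = ‖y - c i‖ := by rw [dist_eq_norm]
    have h3 : s ≤ r i ^ 2 - ‖y - c i‖ ^ 2 := hi0 i (Finset.mem_univ i)
    have h4 : ρ ≤ r i - ‖y - c i‖ := by
      rw [hρ, div_le_iff₀ (by linarith)]
      nlinarith [hy i, hDi i, norm_nonneg (y - c i)]
    linarith
  have hfin : volume R < ⊤ :=
    lt_of_le_of_lt (measure_mono (hR ▸ Set.iInter_subset _ i0))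
      (isCompact_closedBall _ _).measure_lt_top
  set ω := (volume (Metric.closedBall (0 : EuclideanSpace ℝ (Fin n)) 1)).toReal with hω
  have hωfin : volume (Metric.closedBall (0 : EuclideanSpace ℝ (Fin n)) 1) < ⊤ :=
    (isCompact_closedBall _ _).measure_lt_top
  have hωpos : 0 < ω :=
    ENNReal.toReal_pos (Metric.measure_closedBall_pos volume 0 one_pos).ne' hωfin.ne
  have hball := Measure.addHaar_closedBall' (volume : Measure (EuclideanSpace ℝ (Fin n)))
    y hρpos.le
  have hvol : ρ ^ n * ω ≤ (volume R).toReal := by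
    have hm := ENNReal.toReal_mono hfin.ne (measure_mono hsub)
    rwa [hball, finrank_euclideanSpace_fin, ENNReal.toReal_mul,
      ENNReal.toReal_ofReal (by positivity)] at hm
  set V := (volume R).toReal with hV
  have hVnn : 0 ≤ V := ENNReal.toReal_nonneg
  have hbase : (ρ / D) ^ n ≤ V / (D ^ n * ω) := by
    rw [div_pow, div_le_div_iff₀ (by positivity) (by positivity)]
    calc ρ ^ n * (D ^ n * ω) = ρ ^ n * ω * D ^ n := by ring
      _ ≤ V * D ^ n := mul_le_mul_of_nonneg_right hvol (by positivity)
  have hQnn : (0 : ℝ) ≤ (V / (D ^ n * ω)) ^ ((1 : ℝ) / n) := by positivity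
  have hrpow : ρ / D ≤ (V / (D ^ n * ω)) ^ ((1 : ℝ) / n) := by
    have h1 : ((ρ / D) ^ n : ℝ) ^ ((1 : ℝ) / n) ≤ (V / (D ^ n * ω)) ^ ((1 : ℝ) / n) :=
      Real.rpow_le_rpow (by positivity) hbase (by positivity)
    rwa [← Real.rpow_natCast (ρ / D) n, ← Real.rpow_mul (by positivity), mul_one_div,
      div_self (Nat.cast_ne_zero.mpr hn), Real.rpow_one] at h1
  refine ⟨i0, ?_⟩
  rw [hρ] at hrpow
  rw [div_le_iff₀ hD0, div_le_iff₀ (by linarith : (0:ℝ) < 2 * D)] at hrpow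
  nlinarith [mul_nonneg hQnn (sq_nonneg D)]
end
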